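/- arXiv:math/0310224 — 3 statements merged into one kernel-verified Lean document; each statement's English description precedes it below -/
import Mathlib

section
/- Let k be a finite field of odd characteristic p. Then there exists an element a in k such that a^2 - 1 is not a square in k. -/
open MulAction

/-- If every `a ^ 2 - 1` is a square, then `Multiplicative (ZMod p)` acts on the
set of squares of `k` by subtraction. -/
def sqSubAction (k : Type*) [Field k] (p : ℕ) [Fact p.Prime] [CharP k p]
    (h : ∀ x : k, IsSquare x → IsSquare (x - 1)) :
    MulAction (Multiplicative (ZMod p)) {x : k // IsSquare x} where
  smul g x := ⟨x.1 - ((ZMod.castHom dvd_rfl k) g.toAdd), by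
    have key : ∀ (n : ℕ) (y : k), IsSquare y → IsSquare (y - (n : k)) := by
      intro n
      induction n with
      | zero => intro y hy; simpa using hy
      | succ m ih =>
        intro y hy
        have := h _ (ih y hy)
        have e : y - ((m + 1 : ℕ) : k) = y - (m : k) - 1 := by push_cast; ring
        rwa [e]
    have : ((ZMod.castHom dvd_rfl k) g.toAdd) = ((g.toAdd.val : ℕ) : k) := by
      rw [ZMod.castHom_apply]
      exact (ZMod.natCast_val _).symm
    rw [this]
    exact key _ _ x.2⟩
  one_smul x := by
    apply Subtype.ext
    show x.1 - ((ZMod.castHom dvd_rfl k) (Multiplicative.toAdd 1)) = x.1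
    simp
  mul_smul g g' x := by
    apply Subtype.ext
    show x.1 - ((ZMod.castHom dvd_rfl k) (Multiplicative.toAdd (g * g')))
      = (x.1 - (ZMod.castHom dvd_rfl k) g'.toAdd) - (ZMod.castHom dvd_rfl k) g.toAdd
    rw [show Multiplicative.toAdd (g * g') = g.toAdd + g'.toAdd from rfl, map_add]
    ring

theorem exists_sq_sub_one_not_square (k : Type*) [Field k] [Fintype k]
    (p : ℕ) [Fact p.Prime] (hp : p ≠ 2) [CharP k p] :
    ∃ a : k, ¬ IsSquare (a ^ 2 - 1) := by
  classical
  by_contra hcon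
  push_neg at hcon
  have hpp : p.Prime := Fact.out
  have h1 : ∀ x : k, IsSquare x → IsSquare (x - 1) := by
    rintro x ⟨c, rfl⟩
    have := hcon c
    rwa [sq] at this
  -- p divides the number of squares
  letI := sqSubAction k p h1
  have hPG : IsPGroup p (Multiplicative (ZMod p)) := by
    apply IsPGroup.of_card (n := 1)
    simp [Nat.card_eq_fintype_card, ZMod.card]
  have hfix : IsEmpty (fixedPoints (Multiplicative (ZMod p)) {x : k // IsSquare x}) := by
    constructor
    rintro ⟨x, hx⟩
    have := hx (Multiplicative.ofAdd (1 : ZMod p))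
    have h2 : x.1 - ((ZMod.castHom dvd_rfl k) (1 : ZMod p)) = x.1 := congrArg Subtype.val this
    rw [map_one, sub_eq_self] at h2
    exact one_ne_zero h2
  have hmod := hPG.card_modEq_card_fixedPoints (α := {x : k // IsSquare x})
  haveI := hfix
  have hzero : Nat.card (fixedPoints (Multiplicative (ZMod p)) {x : k // IsSquare x}) = 0 :=
    Nat.card_of_isEmpty
  rw [hzero] at hmod
  have hdvd : p ∣ Fintype.card {x : k // IsSquare x} := by
    rw [← Nat.card_eq_fintype_card]
    exact (Nat.modEq_zero_iff_dvd).mp hmod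
  -- counting squares
  have hring : ringChar k = p := ringChar.eq k p
  have hF2 : ringChar k ≠ 2 := by rw [hring]; exact hp
  obtain ⟨b, hb⟩ := FiniteField.exists_nonsquare hF2
  have hb0 : b ≠ 0 := fun h => hb (h ▸ ⟨0, by simp⟩)
  set S : Finset k := Finset.univ.filter (fun x => IsSquare x) with hS
  set N : Finset k := Finset.univ.filter (fun x => ¬ IsSquare x) with hN
  have hSN : S.card + N.card = Fintype.card k := by
    simpa using Finset.card_filter_add_card_filter_not
      (s := (Finset.univ : Finset k)) (p := fun x : k => IsSquare x)
  have h0S : (0 : k) ∈ S := by simp [hS]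
  -- bijection between nonzero squares and nonsquares via multiplication by b
  have hcard : (S.erase 0).card = N.card := by
    apply Finset.card_bij (fun x _ => b * x)
    · intro a ha
      simp only [hS, Finset.mem_erase, Finset.mem_filter, Finset.mem_univ, true_and] at ha
      obtain ⟨hane, hasq⟩ := ha
      simp only [hN, Finset.mem_filter, Finset.mem_univ, true_and]
      intro hsq
      apply hb
      obtain ⟨c, hc⟩ := hsq
      obtain ⟨d, hd⟩ := hasq
      have hd0 : d ≠ 0 := by rintro rfl; rw [mul_zero] at hd; exact hane hd
      exact ⟨c * d⁻¹, by field_simp; linear_combination hc - b * hd⟩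
    · intro a ha a' ha' hmul
      exact mul_left_cancel₀ hb0 hmul
    · intro y hy
      simp only [hN, Finset.mem_filter, Finset.mem_univ, true_and] at hy
      have hy0 : y ≠ 0 := fun h => hy (h ▸ ⟨0, by simp⟩)
      refine ⟨b⁻¹ * y, ?_, by field_simp⟩
      simp only [hS, Finset.mem_erase, Finset.mem_filter, Finset.mem_univ, true_and]
      constructor
      · simp [hb0, hy0]
      · -- product of two nonsquares is a square
        have hb' : quadraticChar k b = -1 := quadraticChar_neg_one_iff_not_isSquare.mpr hb
        have hy' : quadraticChar k y = -1 := quadraticChar_neg_one_iff_not_isSquare.mpr hy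
        have hbinv : quadraticChar k b⁻¹ = -1 := by
          apply quadraticChar_neg_one_iff_not_isSquare.mpr
          rintro ⟨c, hc⟩
          exact hb ⟨c⁻¹, by rw [← inv_inv b, hc, mul_inv]⟩
        have : quadraticChar k (b⁻¹ * y) = 1 := by rw [map_mul, hbinv, hy']; norm_num
        have hne : b⁻¹ * y ≠ 0 := by simp [hb0, hy0]
        exact (quadraticChar_one_iff_isSquare hne).mp this
  have hSe : (S.erase 0).card + 1 = S.card := Finset.card_erase_add_one h0S
  have hScard : Fintype.card {x : k // IsSquare x} = S.card := by
    rw [hS, Fintype.card_subtype]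
  rw [hScard] at hdvd
  -- 2 * S.card = card k + 1
  have h2S : 2 * S.card = Fintype.card k + 1 := by omega
  obtain ⟨n, -, hn⟩ := FiniteField.card k p
  have hpq : p ∣ Fintype.card k := by
    rw [hn]; exact dvd_pow_self p n.ne_zero
  have hfin : p ∣ 1 := by
    have h := Nat.dvd_sub (hdvd.mul_left 2) hpq
    rw [h2S] at h
    simpa using h
  exact hpp.ne_one (Nat.dvd_one.mp hfin)
end

section
/- Let k be a finite field of odd characteristic. If for every a in k the element a^2 - 1 is a square in k, then the number of squares in k is divisible by the characteristic p. -/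
theorem char_dvd_card_squares_of_forall_sq_sub_one_square (k : Type*) [Field k] [Fintype k]
    (p : ℕ) [Fact p.Prime] (hp : p ≠ 2) [CharP k p]
    (h : ∀ a : k, IsSquare (a ^ 2 - 1)) :
    p ∣ Nat.card {x : k // IsSquare x} := by
  classical
  have key : ∀ (m : ℕ) (x : k), IsSquare x → IsSquare (x - m) := by
    intro m
    induction m with
    | zero => simp
    | succ n ih =>
      intro x hx
      obtain ⟨b, hb⟩ := ih x hx
      have hb2 := h b
      rw [sq, ← hb] at hb2
      have : x - (↑(n + 1) : k) = x - n - 1 := by push_cast; ring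
      rwa [this]
  haveI : NeZero p := ⟨(Fact.out : p.Prime).ne_zero⟩
  have keyz : ∀ (n : ZMod p) (x : k), IsSquare x → IsSquare (x - ZMod.cast n) := by
    intro n x hx
    rw [← ZMod.natCast_val]
    exact key n.val x hx
  letI act : MulAction (Multiplicative (ZMod p)) {x : k // IsSquare x} :=
  { smul := fun n x => ⟨x.1 - ZMod.cast n.toAdd, keyz n.toAdd x.1 x.2⟩
    one_smul := fun x => by
      ext
      show x.1 - ZMod.cast (Multiplicative.toAdd (1 : Multiplicative (ZMod p))) = x.1
      simp
    mul_smul := fun m n x => by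
      ext
      show x.1 - ZMod.cast (Multiplicative.toAdd (m * n)) =
        (x.1 - ZMod.cast n.toAdd) - ZMod.cast m.toAdd
      have : Multiplicative.toAdd (m * n) = m.toAdd + n.toAdd := rfl
      rw [this, ZMod.cast_add (dvd_refl p)]
      ring }
  have hpg : IsPGroup p (Multiplicative (ZMod p)) := by
    apply IsPGroup.of_card (n := 1)
    rw [Nat.card_eq_fintype_card, pow_one]
    simp [ZMod.card]
  have hmod := hpg.card_modEq_card_fixedPoints {x : k // IsSquare x}
  have hfix : IsEmpty (MulAction.fixedPoints (Multiplicative (ZMod p)) {x : k // IsSquare x}) := by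
    constructor
    rintro ⟨x, hx⟩
    have h1 := hx (Multiplicative.ofAdd (1 : ZMod p))
    have : x.1 - ZMod.cast (1 : ZMod p) = x.1 := congrArg Subtype.val h1
    rw [ZMod.cast_one (dvd_refl p)] at this
    have : (1 : k) = 0 := by linear_combination -this
    exact one_ne_zero this
  have hz : Nat.card (MulAction.fixedPoints (Multiplicative (ZMod p)) {x : k // IsSquare x}) = 0 :=
    @Nat.card_of_isEmpty _ hfix
  rw [hz] at hmod
  exact (Nat.modEq_zero_iff_dvd).mp hmod
end

section
/- Let K be a field complete with respect to a discrete valuation, and let D be a finite-dimensional central division algebra over K. Then the valuation on K extends uniquely to a valuation on D, given on α ∈ D^* by v(α) = (1/n)·v(nr(α)) where n^2 = dim_K D and nr is the reduced norm; in particular, for a quaternion division algebra, v(α) = (1/2)·v(x1^2 - a x2^2 - b x3^2 + a b x4^2). -/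
/-!
The extension is `w(α) = v(nrd α)^{1/2}`, multiplicative because the reduced norm is. For the
ultrametric inequality one divides by the summand of larger value and is left to show that
`v(nrd γ) ≤ 1` implies `v(nrd (1 + γ)) = v(1 + trd γ + nrd γ) ≤ 1`, i.e. that the reduced trace
is integral whenever the reduced norm is: if `v(trd γ) > 1`, Hensel's lemma splits
`X² - trd(γ) X + nrd(γ)` over the complete field `K`, so `(γ - r)(γ - s) = 0` with `r, s ∈ K`,
and since `D` has no zero divisors `γ ∈ K`, where the claim is clear.
Uniqueness: `ᾱ` is conjugate to `α`, so any multiplicative `w'` extending `v` satisfies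
`w'(α)² = w'(α ᾱ) = v(nrd α)`.
-/

open scoped NNReal Quaternion
open Metric Set

/-- The root is the fixed point of the contraction `y ↦ ε + y²` of the ball of radius `‖ε‖`. -/
theorem exists_mul_self_sub_self_add_eq_zero {K : Type*} [NormedField K] [IsUltrametricDist K]
    [CompleteSpace K] {ε : K} (hε : ‖ε‖ < 1) : ∃ y : K, y * y - y + ε = 0 := by
  let f : K → K := fun y ↦ ε + y * y
  have hmaps : MapsTo f (closedBall 0 ‖ε‖) (closedBall 0 ‖ε‖) := fun y hy ↦ by
    rw [mem_closedBall_zero_iff] at hy ⊢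
    refine (IsUltrametricDist.norm_add_le_max _ _).trans (max_le le_rfl ?_)
    rw [norm_mul]
    nlinarith [norm_nonneg y]
  have hcontr : ContractingWith ‖ε‖₊ (hmaps.restrict f _ _) := by
    refine ⟨hε, LipschitzWith.of_dist_le_mul fun x y ↦ ?_⟩
    have hx := mem_closedBall_zero_iff.1 x.2
    have hy := mem_closedBall_zero_iff.1 y.2
    have hxy : ‖(x + y : K)‖ ≤ ‖ε‖ :=
      (IsUltrametricDist.norm_add_le_max _ _).trans (max_le hx hy)
    calc dist (hmaps.restrict f _ _ x) (hmaps.restrict f _ _ y)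
        = ‖(x + y : K)‖ * dist (x : K) y := by
          simp only [Subtype.dist_eq, MapsTo.val_restrict_apply, dist_eq_norm, ← norm_mul, f]
          ring_nf
      _ ≤ ‖ε‖₊ * dist x y := mul_le_mul_of_nonneg_right hxy dist_nonneg
  obtain ⟨y, -, hy, -⟩ := hcontr.exists_fixedPoint' isClosed_closedBall.isComplete hmaps
    (mem_closedBall_self (norm_nonneg ε)) (edist_ne_top _ _)
  have hy : ε + y * y = y := hy
  exact ⟨y, by linear_combination hy⟩

theorem Valued.exists_add_eq_and_mul_eq {K : Type*} [Field K] [Valued K ℝ≥0] [CompleteSpace K]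
    {t n : K} (ht : 1 < Valued.v t) (hn : Valued.v n ≤ 1) : ∃ r s : K, r + s = t ∧ r * s = n := by
  have ht0 : t ≠ 0 := by rintro rfl; simp at ht
  let : (Valued.v : Valuation K ℝ≥0).RankOne :=
    { hom' := MonoidWithZeroHom.ValueGroup₀.embedding
      strictMono' := MonoidWithZeroHom.ValueGroup₀.embedding_strictMono
      exists_val_nontrivial := ⟨t, by simp [ht0], ht.ne'⟩ }
  let := Valued.toNormedField K ℝ≥0
  have hε : ‖n / t ^ 2‖ < ‖(1 : K)‖ := by
    rw [Valued.toNormedField.norm_lt_iff, map_div₀, map_pow, map_one,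
      div_lt_one (by positivity)]
    exact hn.trans_lt (one_lt_pow₀ ht two_ne_zero)
  obtain ⟨y, hy⟩ := exists_mul_self_sub_self_add_eq_zero (hε.trans_eq norm_one)
  refine ⟨t * y, t - t * y, by ring, ?_⟩
  field_simp at hy
  linear_combination -hy

namespace QuaternionAlgebra

variable {R : Type*} [CommRing R] {c₁ c₂ c₃ : R}

def reducedNorm : ℍ[R,c₁,c₂,c₃] →*₀ R where
  toFun α := (α * star α).re
  map_zero' := by simp
  map_one' := by simp
  map_mul' α β := coe_injective <| by
    rw [← mul_star_eq_coe, coe_mul, ← mul_star_eq_coe, ← mul_star_eq_coe, star_mul, mul_assoc,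
      ← mul_assoc β, mul_star_eq_coe β, ← mul_assoc, ← coe_commutes, mul_assoc, coe_commutes]

def reducedTrace (α : ℍ[R,c₁,c₂,c₃]) : R := (α + star α).re

theorem coe_reducedNorm (α : ℍ[R,c₁,c₂,c₃]) :
    ((reducedNorm α : R) : ℍ[R,c₁,c₂,c₃]) = α * star α :=
  (mul_star_eq_coe α).symm

theorem coe_reducedTrace (α : ℍ[R,c₁,c₂,c₃]) :
    ((reducedTrace α : R) : ℍ[R,c₁,c₂,c₃]) = α + star α := by
  rw [reducedTrace, self_add_star', re_coe]

@[simp]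
theorem reducedNorm_coe (x : R) : reducedNorm (x : ℍ[R,c₁,c₂,c₃]) = x * x := by
  simp [reducedNorm]

@[simp]
theorem reducedTrace_coe (x : R) : reducedTrace (x : ℍ[R,c₁,c₂,c₃]) = 2 * x := by
  simp [reducedTrace, two_mul]

theorem reducedNorm_one_add (γ : ℍ[R,c₁,c₂,c₃]) :
    reducedNorm (1 + γ) = 1 + reducedTrace γ + reducedNorm γ := by
  apply coe_injective (c₁ := c₁) (c₂ := c₂) (c₃ := c₃)
  rw [coe_reducedNorm, coe_add, coe_add, coe_reducedTrace, coe_reducedNorm, coe_one, star_add,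
    star_one]
  noncomm_ring

/-- Cayley–Hamilton for the reduced characteristic polynomial `X² - trd(α) X + nrd(α)`. -/
theorem sub_coe_mul_sub_coe_eq_zero (α : ℍ[R,c₁,c₂,c₃]) {r s : R}
    (hadd : r + s = reducedTrace α) (hmul : r * s = reducedNorm α) : (α - r) * (α - s) = 0 :=
  calc (α - r) * (α - s) = α * α - ↑(r + s) * α + ↑(r * s) := by
        simp only [sub_mul, mul_sub, coe_add, coe_mul, add_mul, ← coe_commutes s α]; abel
    _ = 0 := by
        rw [hadd, hmul, coe_reducedTrace, coe_reducedNorm, add_mul, star_comm_self']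
        abel

theorem reducedNorm_eq_zero_iff [NoZeroDivisors ℍ[R,c₁,c₂,c₃]] {α : ℍ[R,c₁,c₂,c₃]} :
    reducedNorm α = 0 ↔ α = 0 := by
  rw [← coe_inj (c₁ := c₁) (c₂ := c₂) (c₃ := c₃), coe_reducedNorm, coe_zero, mul_eq_zero,
    star_eq_zero, or_self]

theorem isUnit_of_reducedNorm_ne_zero {F : Type*} [Field F] {c₁ c₂ c₃ : F}
    {α : ℍ[F,c₁,c₂,c₃]} (hα : reducedNorm α ≠ 0) : IsUnit α := by
  have hright : α * ((reducedNorm α)⁻¹ • star α) = 1 := by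
    rw [mul_smul_comm, ← coe_reducedNorm, ← coe_mul_eq_smul, ← coe_mul, inv_mul_cancel₀ hα,
      coe_one]
  have hleft : ((reducedNorm α)⁻¹ • star α) * α = 1 := by
    rw [smul_mul_assoc, star_comm_self', ← coe_reducedNorm, ← coe_mul_eq_smul, ← coe_mul,
      inv_mul_cancel₀ hα, coe_one]
  exact ⟨⟨α, _, hright, hleft⟩, rfl⟩

/-- For `α = x₁ + x₂ i + x₃ j + x₄ k`, the element `q = b x₃ i - a x₂ j` (or `q = i` when
`x₂ = x₃ = 0`) anticommutes with the pure part of `α`. -/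
theorem exists_ne_zero_mul_eq_star_mul {F : Type*} [Field F] {a b : F} (ha : a ≠ 0) (hb : b ≠ 0)
    (α : ℍ[F,a,b]) : ∃ q ≠ 0, q * α = star α * q := by
  by_cases hIJ : α.imI = 0 ∧ α.imJ = 0
  · refine ⟨⟨0, 1, 0, 0⟩, fun h ↦ one_ne_zero (congrArg imI h), ?_⟩
    ext <;> simp [hIJ.1, hIJ.2]
  · refine ⟨⟨0, b * α.imJ, -(a * α.imI), 0⟩, fun h ↦ hIJ ?_, ?_⟩
    · have hI := congrArg imJ h
      have hJ := congrArg imI h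
      simp_all
    · ext <;> simp <;> ring

section MulHom

variable {F : Type*} [Field F] {a b : F} {M : Type*} [CommMonoidWithZero M]
  [IsLeftCancelMulZero M] {w : ℍ[F,a,b] → M}

theorem apply_star_of_map_mul (ha : a ≠ 0) (hb : b ≠ 0)
    (hmul : ∀ α β, w (α * β) = w α * w β) (hw : ∀ q, w q = 0 → q = 0) (α : ℍ[F,a,b]) :
    w (star α) = w α := by
  obtain ⟨q, hq, hqα⟩ := exists_ne_zero_mul_eq_star_mul ha hb α
  have h := congrArg w hqα
  rw [hmul, hmul, mul_comm (w (star α))] at h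
  exact (mul_left_cancel₀ (mt (hw q) hq) h).symm

theorem sq_apply_eq_apply_reducedNorm_of_map_mul (ha : a ≠ 0) (hb : b ≠ 0)
    (hmul : ∀ α β, w (α * β) = w α * w β) (hw : ∀ q, w q = 0 → q = 0) (α : ℍ[F,a,b]) :
    w α ^ 2 = w ((reducedNorm α : F) : ℍ[F,a,b]) := by
  rw [coe_reducedNorm, hmul, apply_star_of_map_mul ha hb hmul hw, sq]

end MulHom

section Valued

variable {K : Type*} [Field K] [Valued K ℝ≥0] {c₁ c₂ c₃ : K}

theorem valued_reducedTrace_le_one [CompleteSpace K] [NoZeroDivisors ℍ[K,c₁,c₂,c₃]]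
    {γ : ℍ[K,c₁,c₂,c₃]} (hγ : Valued.v (reducedNorm γ) ≤ 1) :
    Valued.v (reducedTrace γ) ≤ 1 := by
  by_contra! ht
  obtain ⟨r, s, hadd, hmul⟩ := Valued.exists_add_eq_and_mul_eq ht hγ
  obtain ⟨c, rfl⟩ : ∃ c : K, γ = c := by
    rcases mul_eq_zero.1 (sub_coe_mul_sub_coe_eq_zero γ hadd hmul) with h | h
    exacts [⟨r, sub_eq_zero.1 h⟩, ⟨s, sub_eq_zero.1 h⟩]
  rw [reducedNorm_coe, map_mul, mul_self_le_one_iff] at hγ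
  have h2 : Valued.v (2 : K) ≤ 1 := by
    simpa [one_add_one_eq_two] using Valued.v.map_add (1 : K) 1
  rw [reducedTrace_coe, map_mul] at ht
  exact ht.not_ge (mul_le_one' h2 hγ)

variable [CompleteSpace K] [NoZeroDivisors ℍ[K,c₁,c₂,c₃]]

theorem valued_reducedNorm_one_add_le_one {γ : ℍ[K,c₁,c₂,c₃]}
    (hγ : Valued.v (reducedNorm γ) ≤ 1) : Valued.v (reducedNorm (1 + γ)) ≤ 1 := by
  rw [reducedNorm_one_add]
  refine (Valued.v.map_add _ _).trans (max_le ((Valued.v.map_add _ _).trans (max_le ?_ ?_)) hγ)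
  exacts [Valued.v.map_one.le, valued_reducedTrace_le_one hγ]

theorem valued_reducedNorm_add_le_max (α β : ℍ[K,c₁,c₂,c₃]) :
    Valued.v (reducedNorm (α + β)) ≤
      max (Valued.v (reducedNorm α)) (Valued.v (reducedNorm β)) := by
  wlog hle : Valued.v (reducedNorm β) ≤ Valued.v (reducedNorm α) generalizing α β
  · rw [add_comm, max_comm]
    exact this β α (le_of_not_ge hle)
  rcases eq_or_ne α 0 with rfl | hα
  · simp
  obtain ⟨u, rfl⟩ := isUnit_of_reducedNorm_ne_zero (reducedNorm_eq_zero_iff.not.2 hα)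
  set γ := (↑u⁻¹ : ℍ[K,c₁,c₂,c₃]) * β
  have hu : Valued.v (reducedNorm (u : ℍ[K,c₁,c₂,c₃])) ≠ 0 := by
    simp [reducedNorm_eq_zero_iff]
  have hγ : Valued.v (reducedNorm γ) ≤ 1 := by
    rw [← u.mul_inv_cancel_left β, map_mul, map_mul] at hle
    exact le_of_mul_le_mul_left (hle.trans_eq (mul_one _).symm) (pos_iff_ne_zero.2 hu)
  calc Valued.v (reducedNorm (↑u + β))
      = Valued.v (reducedNorm (u : ℍ[K,c₁,c₂,c₃])) * Valued.v (reducedNorm (1 + γ)) := by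
        rw [← map_mul, ← map_mul, mul_one_add, u.mul_inv_cancel_left]
    _ ≤ Valued.v (reducedNorm (u : ℍ[K,c₁,c₂,c₃])) :=
        mul_le_of_le_one_right' (valued_reducedNorm_one_add_le_one hγ)
    _ ≤ _ := le_max_left _ _

noncomputable def reducedNormValuation : Valuation ℍ[K,c₁,c₂,c₃] ℝ≥0 where
  toFun α := NNReal.sqrt (Valued.v (reducedNorm α))
  map_zero' := by simp
  map_one' := by simp
  map_mul' α β := by simp [NNReal.sqrt_mul]
  map_add_le_max' α β := by
    rw [← NNReal.sqrt.monotone.map_max]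
    exact NNReal.sqrt_le_sqrt.2 (valued_reducedNorm_add_le_max α β)

theorem reducedNormValuation_apply (α : ℍ[K,c₁,c₂,c₃]) :
    reducedNormValuation α = NNReal.sqrt (Valued.v (reducedNorm α)) := rfl

theorem reducedNormValuation_coe (x : K) :
    reducedNormValuation (x : ℍ[K,c₁,c₂,c₃]) = Valued.v x := by
  simp [reducedNormValuation_apply]

theorem sq_reducedNormValuation (α : ℍ[K,c₁,c₂,c₃]) :
    reducedNormValuation α ^ 2 = Valued.v (reducedNorm α) := by
  simp [reducedNormValuation_apply]

theorem reducedNormValuation_eq_zero_iff {α : ℍ[K,c₁,c₂,c₃]} :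
    reducedNormValuation α = 0 ↔ α = 0 := by
  simp [reducedNormValuation_apply, reducedNorm_eq_zero_iff]

end Valued

end QuaternionAlgebra

open QuaternionAlgebra

theorem unique_valuation_extension_quaternion_division_algebra_general
    (K : Type*) [Field K] [hv : Valued K NNReal] [CompleteSpace K]
    (a b : K) (ha : a ≠ 0) (hb : b ≠ 0)
    (hdiv : ∀ α : ℍ[K, a, b], α ≠ 0 → IsUnit α) :
    ∃ w : ℍ[K, a, b] → NNReal,
      ((∀ x : K, w ((x : ℍ[K, a, b])) = Valued.v x) ∧
        (∀ α β : ℍ[K, a, b], w (α * β) = w α * w β) ∧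
        (∀ α β : ℍ[K, a, b], w (α + β) ≤ max (w α) (w β)) ∧
        (∀ α : ℍ[K, a, b], w α = 0 ↔ α = 0)) ∧
      (∀ α : ℍ[K, a, b], (w α) ^ 2 = Valued.v ((α * star α).re)) ∧
      (∀ w' : ℍ[K, a, b] → NNReal,
        ((∀ x : K, w' ((x : ℍ[K, a, b])) = Valued.v x) ∧
          (∀ α β : ℍ[K, a, b], w' (α * β) = w' α * w' β) ∧
          (∀ α β : ℍ[K, a, b], w' (α + β) ≤ max (w' α) (w' β)) ∧
          (∀ α : ℍ[K, a, b], w' α = 0 ↔ α = 0)) → w' = w) := by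
  have : NoZeroDivisors ℍ[K,a,b] :=
    ⟨fun {x _} h ↦ or_iff_not_imp_left.2 fun hx ↦ (hdiv x hx).mul_right_eq_zero.1 h⟩
  refine ⟨reducedNormValuation, ⟨reducedNormValuation_coe, map_mul _, Valuation.map_add _,
    fun _ ↦ reducedNormValuation_eq_zero_iff⟩, sq_reducedNormValuation, ?_⟩
  rintro w ⟨hcoe, hmul, -, hzero⟩
  funext α
  rw [← pow_left_inj₀ zero_le zero_le two_ne_zero, sq_reducedNormValuation,
    sq_apply_eq_apply_reducedNorm_of_map_mul ha hb hmul (fun q ↦ (hzero q).1), hcoe]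

/-- Let `K` be a field complete with respect to a discrete (rank one, here `ℝ≥0`-valued)
valuation `v`, and let `D = H(a,b)` be a quaternion division algebra over `K`
(characteristic ≠ 2).  Then `v` extends uniquely to a valuation `w` on `D`
(multiplicative, ultrametric, vanishing only at `0`), and the extension is given by
`w(α)² = v(nr(α))`, where `nr(α) = α·ᾱ = x₁² - a x₂² - b x₃² + a b x₄²` is the reduced
norm; i.e. `w(α) = v(nr α)^{1/2}`. -/
theorem unique_valuation_extension_quaternion_division_algebra
    (K : Type*) [Field K] [hv : Valued K NNReal] [CompleteSpace K]
    (hdisc : ∃ π : K, Valued.v π ≠ 0 ∧ Valued.v π ≠ 1 ∧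
      ∀ x : K, x ≠ 0 → ∃ n : ℤ, Valued.v x = Valued.v π ^ n)
    (h2 : (2 : K) ≠ 0) (a b : K) (ha : a ≠ 0) (hb : b ≠ 0)
    (hdiv : ∀ α : ℍ[K, a, b], α ≠ 0 → IsUnit α) :
    ∃ w : ℍ[K, a, b] → NNReal,
      ((∀ x : K, w ((x : ℍ[K, a, b])) = Valued.v x) ∧
        (∀ α β : ℍ[K, a, b], w (α * β) = w α * w β) ∧
        (∀ α β : ℍ[K, a, b], w (α + β) ≤ max (w α) (w β)) ∧
        (∀ α : ℍ[K, a, b], w α = 0 ↔ α = 0)) ∧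
      (∀ α : ℍ[K, a, b], (w α) ^ 2 = Valued.v ((α * star α).re)) ∧
      (∀ w' : ℍ[K, a, b] → NNReal,
        ((∀ x : K, w' ((x : ℍ[K, a, b])) = Valued.v x) ∧
          (∀ α β : ℍ[K, a, b], w' (α * β) = w' α * w' β) ∧
          (∀ α β : ℍ[K, a, b], w' (α + β) ≤ max (w' α) (w' β)) ∧
          (∀ α : ℍ[K, a, b], w' α = 0 ↔ α = 0)) → w' = w) :=
  unique_valuation_extension_quaternion_division_algebra_general K (hv := hv) a b ha hb hdiv
end
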